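/- Let N ≥ 2, ε ∈ ℝ, and q₁, …, q_N ∈ ℝ² be pairwise distinct, and set q₀ := −ε(q₁ + ⋯ + q_N). Fix j with 1 ≤ j ≤ N and suppose qⱼ ≠ q₀. Then qⱼ · ( (qⱼ − q₀)^⊥/|qⱼ − q₀|² + ε·∑_{i≠j} (qⱼ − qᵢ)^⊥/|qⱼ − qᵢ|² ) = ε·∑_{i≠j} (qⱼ · qᵢ^⊥)·( 1/|qⱼ − q₀|² − 1/|qⱼ − qᵢ|² ), where (x,y)^⊥ := (−y, x) and · denotes the Euclidean dot product on ℝ². -/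

import Mathlib

open Finset

/-- Rotation by `π/2` in the plane: `(x,y)^⊥ = (-y,x)`. -/
def perp (p : ℝ × ℝ) : ℝ × ℝ := (-p.2, p.1)

/-- Euclidean dot product on `ℝ²`. -/
def dot (p q : ℝ × ℝ) : ℝ := p.1 * q.1 + p.2 * q.2

/-!
Since `p · p^⊥ = 0`, every term `qⱼ · (qⱼ - x)^⊥` equals `-qⱼ · x^⊥`. For `x = q₀ = -ε ∑ qᵢ`
this gives `ε ∑_{i≠j} qⱼ · qᵢ^⊥` (the `i = j` term vanishes), so after expanding the left-hand
side linearly both sides are the same combination of the numbers `qⱼ · qᵢ^⊥`.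
-/

lemma dot_add_right (p x y : ℝ × ℝ) : dot p (x + y) = dot p x + dot p y := by
  simp only [dot, Prod.fst_add, Prod.snd_add]; ring

lemma dot_smul_right (p x : ℝ × ℝ) (a : ℝ) : dot p (a • x) = a * dot p x := by
  simp only [dot, Prod.smul_fst, Prod.smul_snd, smul_eq_mul]; ring

lemma dot_sum_right {ι : Type*} (p : ℝ × ℝ) (s : Finset ι) (f : ι → ℝ × ℝ) :
    dot p (∑ i ∈ s, f i) = ∑ i ∈ s, dot p (f i) := by
  simp only [dot, Prod.fst_sum, Prod.snd_sum, mul_sum, sum_add_distrib]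

lemma perp_smul (a : ℝ) (x : ℝ × ℝ) : perp (a • x) = a • perp x := by
  simp only [perp, Prod.smul_mk, Prod.smul_fst, Prod.smul_snd, smul_eq_mul, mul_neg]

lemma perp_sum {ι : Type*} (s : Finset ι) (f : ι → ℝ × ℝ) :
    perp (∑ i ∈ s, f i) = ∑ i ∈ s, perp (f i) := by
  simp only [perp, Prod.ext_iff, Prod.fst_sum, Prod.snd_sum, sum_neg_distrib, and_self]

lemma dot_perp_self (p : ℝ × ℝ) : dot p (perp p) = 0 := by
  simp only [dot, perp]; ring

lemma dot_perp_sub_left_self (p r : ℝ × ℝ) : dot p (perp (p - r)) = -dot p (perp r) := by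
  simp only [dot, perp, Prod.fst_sub, Prod.snd_sub]; ring

lemma dot_perp_sub_center_of_vorticity {ι : Type*} [Fintype ι] [DecidableEq ι]
    (q : ι → ℝ × ℝ) (ε : ℝ) (j : ι) :
    dot (q j) (perp (q j - -ε • ∑ i, q i)) = ε * ∑ i ∈ univ.erase j, dot (q j) (perp (q i)) := by
  rw [dot_perp_sub_left_self, perp_smul, dot_smul_right, perp_sum, dot_sum_right,
    ← sum_erase univ (f := fun i => dot (q j) (perp (q i))) (dot_perp_self (q j))]
  ring

theorem radial_velocity_identity (N : ℕ) (ε : ℝ)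
    (q : Fin N → ℝ × ℝ)
    (q0 : ℝ × ℝ) (hq0 : q0 = -ε • ∑ i : Fin N, q i)
    (j : Fin N) :
    dot (q j)
      ((dot (q j - q0) (q j - q0))⁻¹ • perp (q j - q0) +
        ε • ∑ i ∈ Finset.univ.erase j,
          (dot (q j - q i) (q j - q i))⁻¹ • perp (q j - q i))
    = ε * ∑ i ∈ Finset.univ.erase j,
        dot (q j) (perp (q i)) *
          (1 / dot (q j - q0) (q j - q0) - 1 / dot (q j - q i) (q j - q i)) := by
  have hcenter : dot (q j) (perp (q j - q0)) = ε * ∑ i ∈ univ.erase j, dot (q j) (perp (q i)) := by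
    rw [hq0]; exact dot_perp_sub_center_of_vorticity q ε j
  simp only [dot_add_right, dot_smul_right, dot_sum_right, dot_perp_sub_left_self, hcenter, mul_sub,
    sum_sub_distrib, ← sum_mul, one_div, mul_neg, sum_neg_distrib,
    mul_comm _ (dot (q j) (perp _))]
  ring
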